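/- arXiv:2210.10471 — 4 statements merged into one kernel-verified Lean document; each statement's English description precedes it below -/
import Mathlib

section
/- Let 𝒜 be an L-algebra on an infinite-dimensional real Banach space X. Then the restriction of 𝒜^F to X^F is strictly transitive on X^F: for every nonzero x ∈ X^F and every y ∈ X^F there is T ∈ 𝒜^F with Tx = y (equivalently, 𝒜^F x = X^F for every nonzero x ∈ X^F). -/
open Filter Topology

noncomputable section

variable {X : Type*} [NormedAddCommGroup X] [NormedSpace ℝ X]

/-- A bounded operator is of finite rank if its range is finite-dimensional. -/
def FiniteRank (T : X →L[ℝ] X) : Prop :=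
  FiniteDimensional ℝ (LinearMap.range (T : X →ₗ[ℝ] X))

/-- Transitivity: every orbit of a nonzero vector is dense. -/
def IsTransitiveAlg (A : Set (X →L[ℝ] X)) : Prop :=
  ∀ x : X, x ≠ 0 → ∀ y : X, ∀ ε > 0, ∃ T ∈ A, ‖T x - y‖ < ε

/-- A set of operators is an "L-set" if it is transitive and contains
a nonzero finite-rank operator. -/
def IsLSet (A : Set (X →L[ℝ] X)) : Prop :=
  IsTransitiveAlg A ∧ ∃ T ∈ A, T ≠ 0 ∧ FiniteRank T

/-- `A^F`: the finite-rank elements of `A`. -/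
def AF (A : Set (X →L[ℝ] X)) : Set (X →L[ℝ] X) :=
  {T | T ∈ A ∧ FiniteRank T}

/-- `X^F = span {T x : T ∈ A^F, x ∈ X}`. -/
def XF (A : Set (X →L[ℝ] X)) : Submodule ℝ X :=
  Submodule.span ℝ {y | ∃ T ∈ AF A, ∃ x : X, T x = y}

lemma mapsto_XF {A : Set (X →L[ℝ] X)} {T : X →L[ℝ] X} (hT : T ∈ AF A) :
    ∀ x ∈ XF A, (T : X →ₗ[ℝ] X) x ∈ XF A :=
  fun x _ => Submodule.subset_span ⟨T, hT, x, rfl⟩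

/-- `𝔻`: the algebra of all `ℝ`-linear endomorphisms of `X^F` commuting with the
restriction to `X^F` of every operator in `A^F`. -/
def DD (A : Set (X →L[ℝ] X)) : Subalgebra ℝ (Module.End ℝ (XF A)) :=
  Subalgebra.centralizer ℝ
    {S | ∃ T : X →L[ℝ] X, ∃ hT : T ∈ AF A, S = (T : X →ₗ[ℝ] X).restrict (mapsto_XF hT)}

def RealType (A : Set (X →L[ℝ] X)) : Prop := Nonempty (DD A ≃ₐ[ℝ] ℝ)
def ComplexType (A : Set (X →L[ℝ] X)) : Prop := Nonempty (DD A ≃ₐ[ℝ] ℂ)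
def QuaternionType (A : Set (X →L[ℝ] X)) : Prop := Nonempty (DD A ≃ₐ[ℝ] Quaternion ℝ)

/-- `A` is dense: on any finite linearly independent family, elements of `A`
approximate arbitrary prescribed values. -/
def IsDenseAlg (A : Set (X →L[ℝ] X)) : Prop :=
  ∀ ε > 0, ∀ n : ℕ, ∀ x : Fin n → X, LinearIndependent ℝ x →
    ∀ y : Fin n → X, ∃ T ∈ A, ∀ i, ‖T (x i) - y i‖ < ε

/-- `A` is `(1/k)`-dense. -/
def IsFracDense (k : ℕ) (A : Set (X →L[ℝ] X)) : Prop :=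
  ∀ ε > 0, ∀ n : ℕ, ∀ x : Fin (k * n) → X, LinearIndependent ℝ x →
    ∀ y : Fin n → X, ∃ j : Fin n → Fin (k * n), ∃ T ∈ A,
      ∀ i, ‖y i - T (x (j i))‖ < ε

/-- `T` lies in the closure of `A` in the strong operator topology. -/
def InSOTClosure (A : Set (X →L[ℝ] X)) (T : X →L[ℝ] X) : Prop :=
  ∀ ε > 0, ∀ s : Finset X, ∃ S ∈ A, ∀ x ∈ s, ‖S x - T x‖ < ε

/-- Closure of `A` in the strong operator topology. -/
def SOTcl (A : Set (X →L[ℝ] X)) : Set (X →L[ℝ] X) := {T | InSOTClosure A T}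

/-- `A` is closed in the strong operator topology. -/
def SOTClosed (A : Set (X →L[ℝ] X)) : Prop :=
  ∀ T : X →L[ℝ] X, InSOTClosure A T → T ∈ A

/-- A Lomonosov set: transitive, SOT-closed, containing a nonzero compact operator. -/
def IsLomonosov (A : Set (X →L[ℝ] X)) : Prop :=
  IsTransitiveAlg A ∧ SOTClosed A ∧ ∃ T ∈ A, T ≠ 0 ∧ IsCompactOperator (⇑T)

/-- Similarity of operator algebras. -/
def SimilarAlg (A B : Set (X →L[ℝ] X)) : Prop :=
  ∃ T : X ≃L[ℝ] X,
    (fun S => (T : X →L[ℝ] X).comp (S.comp ((T.symm : X →L[ℝ] X)))) '' A = B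

/-- A partial complex structure: a densely defined operator `S` with `S ∘ S = -1`
(equivalently `S⁻¹ = -S`) mapping its domain onto itself. -/
structure PCS (X : Type*) [NormedAddCommGroup X] [NormedSpace ℝ X] where
  domain : Submodule ℝ X
  dense' : Dense (domain : Set X)
  map : domain →ₗ[ℝ] domain
  anti : ∀ x : domain, map (map x) = -x

/-- A PCS is closed if its graph is closed in `X × X`. -/
def PCSClosed (S : PCS X) : Prop :=
  IsClosed (Set.range fun x : S.domain => ((x : X), (S.map x : X)))

/-- The algebra `𝒜_S` of all bounded operators leaving `D(S)` invariant and
commuting with `S` on `D(S)`. -/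
def AlgS (S : PCS X) : Set (X →L[ℝ] X) :=
  {T | ∀ x : S.domain, ∃ y : S.domain, (y : X) = T x ∧ T (S.map x : X) = (S.map y : X)}

/-- A representation of the quaternion group `G_ℍ` by linear bijections of a dense
subspace of `X`, with `π(1) = id` and `π(-1) = -id`. -/
structure QRep (X : Type*) [NormedAddCommGroup X] [NormedSpace ℝ X] where
  domain : Submodule ℝ X
  dense' : Dense (domain : Set X)
  pi : QuaternionGroup 2 → Module.End ℝ domain
  pi_one : pi 1 = 1
  pi_mul : ∀ g h, pi (g * h) = pi g * pi h
  pi_neg_one : pi (QuaternionGroup.a 2) = -1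

/-- The representation is closed. -/
def QRepClosed (ρ : QRep X) : Prop :=
  ∀ (x : ℕ → ρ.domain) (w : QuaternionGroup 2 → X),
    (∀ g, Tendsto (fun n => (ρ.pi g (x n) : X)) atTop (𝓝 (w g))) →
    ∃ z : ρ.domain, ∀ g, w g = (ρ.pi g z : X)

/-- The representation is regular: the functionals bounded on the orbit of the
representation are weak*-dense in the dual. -/
def QRepRegular (ρ : QRep X) : Prop :=
  Dense ((StrongDual.toWeakDual) ''
    {f : StrongDual ℝ X |
      ∃ C > 0, ∀ g : QuaternionGroup 2, ∀ x : ρ.domain, |f (ρ.pi g x : X)| ≤ C * ‖(x : X)‖})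

/-- The algebra `𝒜_π`. -/
def AlgPi (ρ : QRep X) : Set (X →L[ℝ] X) :=
  {T | ∀ x : ρ.domain, ∃ y : ρ.domain, (y : X) = T x ∧
    ∀ g : QuaternionGroup 2, T (ρ.pi g x : X) = (ρ.pi g y : X)}

/-!
Fix `x ≠ 0`. Transitivity and a nonzero finite-rank `T₀ ∈ 𝒜` give `K = T₀ S ∈ 𝒜^F` with
`K x ≠ 0`, and then `𝒜^F x ⊇ 𝒜 (K x)` is a dense subspace of `X`. For `T ∈ 𝒜^F` the subspace
`T (𝒜^F x)` of the finite-dimensional range of `T` is closed and dense in `T X`, hence equal to it;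
as `T 𝒜^F ⊆ 𝒜^F`, this gives `T X ⊆ 𝒜^F x`, and so `X^F ⊆ 𝒜^F x`.
-/

namespace FiniteRank

variable {T S : X →L[ℝ] X}

lemma finiteDimensional_range (hT : FiniteRank T) :
    FiniteDimensional ℝ (LinearMap.range (T : X →ₗ[ℝ] X)) :=
  hT

lemma of_range_le {p : Submodule ℝ X} [FiniteDimensional ℝ p]
    (h : LinearMap.range (T : X →ₗ[ℝ] X) ≤ p) : FiniteRank T :=
  Submodule.finiteDimensional_of_le h

lemma zero : FiniteRank (0 : X →L[ℝ] X) :=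
  of_range_le (p := ⊥) (by simp)

lemma add (hT : FiniteRank T) (hS : FiniteRank S) : FiniteRank (T + S) :=
  have := hT.finiteDimensional_range
  have := hS.finiteDimensional_range
  of_range_le (LinearMap.range_add_le (T : X →ₗ[ℝ] X) S)

lemma smul (c : ℝ) (hT : FiniteRank T) : FiniteRank (c • T) :=
  have := hT.finiteDimensional_range
  of_range_le (LinearMap.range_smul_le_range (T : X →ₗ[ℝ] X) c)

lemma comp_clm (hT : FiniteRank T) (S : X →L[ℝ] X) : FiniteRank (T.comp S) :=
  have := hT.finiteDimensional_range
  of_range_le (LinearMap.range_comp_le_range (S : X →ₗ[ℝ] X) (T : X →ₗ[ℝ] X))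

lemma clm_comp (T : X →L[ℝ] X) (hS : FiniteRank S) : FiniteRank (T.comp S) :=
  have := hS.finiteDimensional_range
  of_range_le (LinearMap.range_comp (S : X →ₗ[ℝ] X) (T : X →ₗ[ℝ] X)).le

lemma apply_mem_map_of_dense (hT : FiniteRank T) {p : Submodule ℝ X}
    (hp : Dense (p : Set X)) (v : X) : T v ∈ p.map (T : X →ₗ[ℝ] X) := by
  have := hT.finiteDimensional_range
  have : FiniteDimensional ℝ (p.map (T : X →ₗ[ℝ] X)) :=
    Submodule.finiteDimensional_of_le LinearMap.map_le_range
  have hclosed : IsClosed (p.map (T : X →ₗ[ℝ] X) : Set X) :=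
    Submodule.closed_of_finiteDimensional _
  refine hclosed.closure_subset (map_mem_closure T.continuous (hp v) ?_)
  exact fun w hw => ⟨w, hw, rfl⟩

end FiniteRank

def finiteRankSubmodule : Submodule ℝ (X →L[ℝ] X) where
  carrier := {T | FiniteRank T}
  add_mem' := FiniteRank.add
  zero_mem' := FiniteRank.zero
  smul_mem' c _ := FiniteRank.smul c

/-- The orbit `𝒜^F x`. -/
def finiteRankOrbit (A : NonUnitalSubalgebra ℝ (X →L[ℝ] X)) (x : X) : Submodule ℝ X :=
  (A.toSubmodule ⊓ finiteRankSubmodule).map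
    (ContinuousLinearMap.apply ℝ X x : (X →L[ℝ] X) →ₗ[ℝ] X)

section LAlgebra

variable {A : NonUnitalSubalgebra ℝ (X →L[ℝ] X)} {T K : X →L[ℝ] X} {x y : X}

lemma mem_finiteRankOrbit : y ∈ finiteRankOrbit A x ↔ ∃ T ∈ AF (A : Set (X →L[ℝ] X)), T x = y :=
  Iff.rfl

lemma comp_mem_AF_left (hT : T ∈ A) (hK : K ∈ AF (A : Set (X →L[ℝ] X))) :
    T.comp K ∈ AF (A : Set (X →L[ℝ] X)) :=
  ⟨mul_mem hT hK.1, hK.2.clm_comp T⟩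

lemma comp_mem_AF_right (hK : K ∈ AF (A : Set (X →L[ℝ] X))) (hT : T ∈ A) :
    K.comp T ∈ AF (A : Set (X →L[ℝ] X)) :=
  ⟨mul_mem hK.1 hT, hK.2.comp_clm T⟩

lemma IsTransitiveAlg.dense_orbit {B : Set (X →L[ℝ] X)} (hB : IsTransitiveAlg B) (hx : x ≠ 0) :
    Dense {y | ∃ T ∈ B, T x = y} := by
  refine Metric.dense_iff.2 fun y r hr => ?_
  obtain ⟨T, hT, hTy⟩ := hB x hx y r hr
  exact ⟨T x, by rwa [Metric.mem_ball, dist_eq_norm], T, hT, rfl⟩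

lemma exists_mem_AF_apply_ne_zero (hA : IsLSet (A : Set (X →L[ℝ] X))) (hx : x ≠ 0) :
    ∃ K ∈ AF (A : Set (X →L[ℝ] X)), K x ≠ 0 := by
  obtain ⟨htrans, T₀, hT₀, hT₀ne, hT₀F⟩ := hA
  obtain ⟨u, hu⟩ : ∃ u, T₀ u ≠ 0 := by
    by_contra! h
    exact hT₀ne (ContinuousLinearMap.ext h)
  have hopen : IsOpen {v | T₀ v ≠ 0} := isOpen_ne_fun T₀.continuous continuous_const
  obtain ⟨_, ⟨S, hS, rfl⟩, hSx⟩ := (htrans.dense_orbit hx).exists_mem_open hopen ⟨u, hu⟩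
  exact ⟨T₀.comp S, comp_mem_AF_right ⟨hT₀, hT₀F⟩ hS, hSx⟩

lemma dense_finiteRankOrbit (hA : IsLSet (A : Set (X →L[ℝ] X))) (hx : x ≠ 0) :
    Dense (finiteRankOrbit A x : Set X) := by
  obtain ⟨K, hK, hKx⟩ := exists_mem_AF_apply_ne_zero hA hx
  refine (hA.1.dense_orbit hKx).mono ?_
  rintro _ ⟨T, hT, rfl⟩
  exact ⟨T.comp K, comp_mem_AF_left hT hK, rfl⟩

lemma XF_le_finiteRankOrbit (hA : IsLSet (A : Set (X →L[ℝ] X))) (hx : x ≠ 0) :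
    XF (A : Set (X →L[ℝ] X)) ≤ finiteRankOrbit A x := by
  refine Submodule.span_le.2 ?_
  rintro _ ⟨T, hT, v, rfl⟩
  obtain ⟨_, ⟨R, hR, rfl⟩, hTR⟩ :=
    hT.2.apply_mem_map_of_dense (dense_finiteRankOrbit hA hx) v
  exact ⟨T.comp R, comp_mem_AF_right hT hR.1, hTR⟩

end LAlgebra

theorem stmt3_general {X : Type*} [NormedAddCommGroup X] [NormedSpace ℝ X]
    (A : NonUnitalSubalgebra ℝ (X →L[ℝ] X))
    (hA : IsLSet (A : Set (X →L[ℝ] X))) :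
    ∀ x ∈ XF (A : Set (X →L[ℝ] X)), x ≠ 0 →
      ∀ y ∈ XF (A : Set (X →L[ℝ] X)),
        ∃ T ∈ AF (A : Set (X →L[ℝ] X)), T x = y :=
  fun _ _ hx _ hy => mem_finiteRankOrbit.1 (XF_le_finiteRankOrbit hA hx hy)

/-- For an L-algebra `𝒜`, the restriction of `𝒜^F` to `X^F` is strictly
transitive on `X^F`. -/
theorem stmt3 {X : Type*} [NormedAddCommGroup X] [NormedSpace ℝ X] [CompleteSpace X]
    (hinf : ¬ FiniteDimensional ℝ X)
    (A : NonUnitalSubalgebra ℝ (X →L[ℝ] X))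
    (hA : IsLSet (A : Set (X →L[ℝ] X))) :
    ∀ x ∈ XF (A : Set (X →L[ℝ] X)), x ≠ 0 →
      ∀ y ∈ XF (A : Set (X →L[ℝ] X)),
        ∃ T ∈ AF (A : Set (X →L[ℝ] X)), T x = y :=
  stmt3_general A hA

end
end

section
/- Let 𝒜 be an L-algebra on an infinite-dimensional real Banach space X. Then the algebra 𝔻 of all ℝ-linear endomorphisms of X^F commuting with the restriction to X^F of every operator in 𝒜^F is finite-dimensional as a real vector space. -/
open Filter Topology

noncomputable section

variable {X : Type*} [NormedAddCommGroup X] [NormedSpace ℝ X]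

/-!
The finite-rank part `𝒜^F` is a nonzero ideal of `𝒜`, so it is transitive as well. If `D ∈ 𝔻`
kills a nonzero vector of `X^F`, its kernel is an `𝒜^F`-invariant subspace containing a dense
`𝒜^F`-orbit; a finite-rank operator maps a dense subspace onto its (closed) range, so that kernel
contains every `T x` with `T ∈ 𝒜^F`, i.e. all of `X^F`, and `D = 0`. Hence evaluation at a
nonzero vector `T₀ z` of `X^F` is injective on `𝔻`, and it takes values in the
finite-dimensional range of `T₀` because `D (T₀ z) = T₀ (D z)`.
-/

theorem Submodule.finite_of_eval_injective {R V W : Type*} [CommRing R] [IsNoetherianRing R]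
    [AddCommGroup V] [Module R V] [AddCommGroup W] [Module R W]
    (P : Submodule R (V →ₗ[R] W)) (v : V) (U : Submodule R W) [Module.Finite R U]
    (hU : ∀ f ∈ P, f v ∈ U) (hP : ∀ f ∈ P, f v = 0 → f = 0) : Module.Finite R P := by
  let eval : P →ₗ[R] U := ((LinearMap.applyₗ v).comp P.subtype).codRestrict U fun f => hU f f.2
  refine Module.Finite.of_injective eval ((injective_iff_map_eq_zero eval).2 fun f hf => ?_)
  exact Subtype.ext (hP f f.2 (congrArg Subtype.val hf))

theorem ContinuousLinearMap.exists_mem_apply_ne_zero_of_dense {R E F : Type*} [Semiring R]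
    [TopologicalSpace E] [AddCommMonoid E] [Module R E]
    [TopologicalSpace F] [AddCommMonoid F] [Module R F] [T2Space F]
    {f : E →L[R] F} (hf : f ≠ 0) {s : Set E} (hs : Dense s) : ∃ z ∈ s, f z ≠ 0 := by
  by_contra! h
  exact hf (ContinuousLinearMap.coeFn_injective (Continuous.ext_on hs f.continuous continuous_const h))

theorem ContinuousLinearMap.map_eq_range_of_dense {𝕜 E F : Type*} [NontriviallyNormedField 𝕜]
    [CompleteSpace 𝕜] [NormedAddCommGroup E] [NormedSpace 𝕜 E] [NormedAddCommGroup F]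
    [NormedSpace 𝕜 F] (T : E →L[𝕜] F) [FiniteDimensional 𝕜 (LinearMap.range (T : E →ₗ[𝕜] F))]
    {K : Submodule 𝕜 E} (hK : Dense (K : Set E)) :
    K.map (T : E →ₗ[𝕜] F) = LinearMap.range (T : E →ₗ[𝕜] F) := by
  have : FiniteDimensional 𝕜 (K.map (T : E →ₗ[𝕜] F)) :=
    Submodule.finiteDimensional_of_le LinearMap.map_le_range
  refine le_antisymm LinearMap.map_le_range ?_
  rintro _ ⟨x, rfl⟩
  refine (Submodule.closed_of_finiteDimensional _).closure_subset ?_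
  rw [Submodule.map_coe]
  exact image_closure_subset_closure_image T.continuous ⟨x, hK.closure_eq ▸ trivial, rfl⟩

namespace FiniteRank

theorem mul_left {T : X →L[ℝ] X} (U : X →L[ℝ] X) (hT : FiniteRank T) : FiniteRank (U * T) := by
  have : FiniteDimensional ℝ (LinearMap.range (T : X →ₗ[ℝ] X)) := hT
  change FiniteDimensional ℝ (LinearMap.range ((U : X →ₗ[ℝ] X).comp (T : X →ₗ[ℝ] X)))
  rw [LinearMap.range_comp]
  infer_instance

theorem mul_right {T : X →L[ℝ] X} (hT : FiniteRank T) (U : X →L[ℝ] X) : FiniteRank (T * U) := by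
  have : FiniteDimensional ℝ (LinearMap.range (T : X →ₗ[ℝ] X)) := hT
  exact Submodule.finiteDimensional_of_le (LinearMap.range_comp_le_range (U : X →ₗ[ℝ] X) _)

theorem finiteDimensional_comap_subtype {T : X →L[ℝ] X} (hT : FiniteRank T) (K : Submodule ℝ X) :
    FiniteDimensional ℝ ((LinearMap.range (T : X →ₗ[ℝ] X)).comap K.subtype) := by
  have : FiniteDimensional ℝ (LinearMap.range (T : X →ₗ[ℝ] X)) := hT
  refine Module.Finite.of_injective (K.subtype.restrict fun _ hx => Submodule.mem_comap.1 hx) fun a b h => ?_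
  exact Subtype.ext (Subtype.ext (congrArg Subtype.val h :))

end FiniteRank

theorem IsTransitiveAlg.dense_orbit_s4 {A : Set (X →L[ℝ] X)} (hA : IsTransitiveAlg A) {x : X}
    (hx : x ≠ 0) : Dense ((fun T : X →L[ℝ] X => T x) '' A) := by
  refine Metric.dense_iff.2 fun y ε hε => ?_
  obtain ⟨T, hT, hTy⟩ := hA x hx y ε hε
  exact ⟨T x, by rwa [Metric.mem_ball, dist_eq_norm], T, hT, rfl⟩

namespace IsLSet

variable {S : Type*} [SetLike S (X →L[ℝ] X)] [MulMemClass S (X →L[ℝ] X)] {A : S}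

theorem exists_mem_AF_apply_ne_zero (hA : IsLSet (A : Set (X →L[ℝ] X))) {x : X} (hx : x ≠ 0) :
    ∃ T ∈ AF (A : Set (X →L[ℝ] X)), T x ≠ 0 := by
  obtain ⟨htr, T₀, hT₀A, hT₀, hT₀fr⟩ := hA
  obtain ⟨_, ⟨U, hU, rfl⟩, hT₀U⟩ :=
    ContinuousLinearMap.exists_mem_apply_ne_zero_of_dense hT₀ (htr.dense_orbit_s4 hx)
  exact ⟨T₀ * U, ⟨mul_mem hT₀A hU, hT₀fr.mul_right U⟩, hT₀U⟩

theorem isTransitiveAlg_AF (hA : IsLSet (A : Set (X →L[ℝ] X))) :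
    IsTransitiveAlg (AF (A : Set (X →L[ℝ] X))) := by
  intro x hx y ε hε
  obtain ⟨T, hT, hTx⟩ := hA.exists_mem_AF_apply_ne_zero hx
  obtain ⟨U, hU, hUy⟩ := hA.1 (T x) hTx y ε hε
  exact ⟨U * T, ⟨mul_mem hU hT.1, hT.2.mul_left U⟩, hUy⟩

end IsLSet

section Commutant

variable {A : Set (X →L[ℝ] X)}

theorem dense_of_AF_invariant (htr : IsTransitiveAlg (AF A)) {K : Submodule ℝ X}
    (hinv : ∀ T ∈ AF A, ∀ x ∈ K, T x ∈ K) {w : X} (hw : w ∈ K) (hw0 : w ≠ 0) :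
    Dense (K : Set X) :=
  (htr.dense_orbit_s4 hw0).mono (by rintro _ ⟨T, hT, rfl⟩; exact hinv T hT w hw)

theorem XF_le_of_dense_of_AF_invariant {K : Submodule ℝ X} (hK : Dense (K : Set X))
    (hinv : ∀ T ∈ AF A, ∀ x ∈ K, T x ∈ K) : XF A ≤ K := by
  refine Submodule.span_le.2 ?_
  rintro _ ⟨T, hT, x, rfl⟩
  have : FiniteDimensional ℝ (LinearMap.range (T : X →ₗ[ℝ] X)) := hT.2
  obtain ⟨k, hk, hkT⟩ : T x ∈ K.map (T : X →ₗ[ℝ] X) := by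
    rw [T.map_eq_range_of_dense hK]
    exact ⟨x, rfl⟩
  exact hkT ▸ hinv T hT k hk

theorem apply_restrict_of_mem_DD {D : Module.End ℝ (XF A)} (hD : D ∈ DD A) {T : X →L[ℝ] X}
    (hT : T ∈ AF A) (w : XF A) :
    D ((T : X →ₗ[ℝ] X).restrict (mapsto_XF hT) w) = (T : X →ₗ[ℝ] X).restrict (mapsto_XF hT) (D w) :=
  (LinearMap.congr_fun ((Subalgebra.mem_centralizer_iff ℝ).1 hD _ ⟨T, hT, rfl⟩) w).symm

theorem eq_zero_of_mem_DD_of_apply_eq_zero (htr : IsTransitiveAlg (AF A))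
    {D : Module.End ℝ (XF A)} (hD : D ∈ DD A) {w : XF A} (hw : w ≠ 0) (hDw : D w = 0) :
    D = 0 := by
  set K := (LinearMap.ker D).map (XF A).subtype
  have hinv : ∀ T ∈ AF A, ∀ x ∈ K, T x ∈ K := by
    rintro T hT _ ⟨k, hk, rfl⟩
    refine ⟨(T : X →ₗ[ℝ] X).restrict (mapsto_XF hT) k, ?_, rfl⟩
    rw [SetLike.mem_coe, LinearMap.mem_ker, apply_restrict_of_mem_DD hD hT, hk, map_zero]
  have hK : Dense (K : Set X) :=
    dense_of_AF_invariant htr hinv ⟨w, hDw, rfl⟩ (by simpa using hw)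
  ext v
  obtain ⟨k, hk, hkv⟩ := XF_le_of_dense_of_AF_invariant hK hinv v.2
  rw [← Subtype.ext hkv]
  simpa using hk

end Commutant

theorem stmt4_general {X : Type*} [NormedAddCommGroup X] [NormedSpace ℝ X]
    (A : NonUnitalSubalgebra ℝ (X →L[ℝ] X))
    (hA : IsLSet (A : Set (X →L[ℝ] X))) :
    FiniteDimensional ℝ (DD (A : Set (X →L[ℝ] X))) := by
  have htr := hA.isTransitiveAlg_AF
  obtain ⟨-, T₀, hT₀A, hT₀, hT₀fr⟩ := hA
  have hT₀AF : T₀ ∈ AF (A : Set (X →L[ℝ] X)) := ⟨hT₀A, hT₀fr⟩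
  obtain ⟨u, hu⟩ : ∃ u, T₀ u ≠ 0 := by
    by_contra! h
    exact hT₀ (ContinuousLinearMap.ext h)
  have hXF : Dense (XF (A : Set (X →L[ℝ] X)) : Set X) :=
    dense_of_AF_invariant htr (fun _ hT => mapsto_XF hT) (Submodule.subset_span ⟨T₀, hT₀AF, u, rfl⟩) hu
  obtain ⟨z, hzXF, hz⟩ := ContinuousLinearMap.exists_mem_apply_ne_zero_of_dense hT₀ hXF
  set R₀ := (T₀ : X →ₗ[ℝ] X).restrict (mapsto_XF hT₀AF)
  have := hT₀fr.finiteDimensional_comap_subtype (XF (A : Set (X →L[ℝ] X)))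
  refine Submodule.finite_of_eval_injective (Subalgebra.toSubmodule (DD _)) (R₀ ⟨z, hzXF⟩)
    ((LinearMap.range (T₀ : X →ₗ[ℝ] X)).comap (XF (A : Set (X →L[ℝ] X))).subtype)
    (fun D hD => ?_) fun D hD hDv => eq_zero_of_mem_DD_of_apply_eq_zero htr hD ?_ hDv
  · rw [Subalgebra.mem_toSubmodule] at hD
    rw [Submodule.mem_comap, apply_restrict_of_mem_DD hD hT₀AF]
    exact ⟨_, rfl⟩
  · exact fun h => hz (congrArg Subtype.val h)

/-- For an L-algebra `𝒜`, the commutant `𝔻` of `𝒜^F` on `X^F` is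
finite-dimensional as a real vector space. -/
theorem stmt4 {X : Type*} [NormedAddCommGroup X] [NormedSpace ℝ X] [CompleteSpace X]
    (hinf : ¬ FiniteDimensional ℝ X)
    (A : NonUnitalSubalgebra ℝ (X →L[ℝ] X))
    (hA : IsLSet (A : Set (X →L[ℝ] X))) :
    FiniteDimensional ℝ (DD (A : Set (X →L[ℝ] X))) :=
  stmt4_general A hA

end
end

section
/- Let 𝒜 be an L-algebra on an infinite-dimensional real Banach space X. (i) If 𝒜 is of complex type then the rank of every operator T ∈ 𝒜^F is even. (ii) If 𝒜 is of quaternion type then the rank of every operator T ∈ 𝒜^F is divisible by four. -/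
open Filter Topology

noncomputable section

variable {X : Type*} [NormedAddCommGroup X] [NormedSpace ℝ X]

/-! The division algebra `𝔻 ≅ K` acts on `X^F` commuting with the restriction `T'` of `T ∈ 𝒜^F`,
so `range T'` is a `K`-vector space and its real dimension is a multiple of `dim_ℝ K`.
Transitivity makes `X^F` dense, and `range T` is finite-dimensional, hence closed, so
`T (X^F) = range T` and `rank T' = rank T`. -/

theorem Module.finrank_dvd_finrank_range_of_commute {F K M : Type*} [Field F] [DivisionRing K]
    [Algebra F K] [AddCommGroup M] [Module F M] (ψ : K →ₐ[F] Module.End F M)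
    (f : Module.End F M) (hf : ∀ k, Commute f (ψ k)) :
    Module.finrank F K ∣ Module.finrank F (LinearMap.range f) := by
  let _ : Module K M := Module.compHom M ψ.toRingHom
  have : IsScalarTower F K M :=
    ⟨fun r k x => by
      show ψ (r • k) x = r • ψ k x
      rw [map_smul, LinearMap.smul_apply]⟩
  let fK : M →ₗ[K] M :=
    { f with map_smul' := fun k x => LinearMap.congr_fun (hf k).eq x }
  have hrange : (LinearMap.range fK).restrictScalars F = LinearMap.range f := rfl
  rw [← hrange]
  exact Module.finrank_dvd_finrank_right F K (LinearMap.range fK)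

theorem LinearMap.map_eq_range_of_dense {𝕜 E F : Type*} [NontriviallyNormedField 𝕜]
    [CompleteSpace 𝕜] [AddCommGroup E] [TopologicalSpace E] [Module 𝕜 E]
    [AddCommGroup F] [TopologicalSpace F] [IsTopologicalAddGroup F] [Module 𝕜 F]
    [ContinuousSMul 𝕜 F] [T2Space F] (f : E →ₗ[𝕜] F) (hf : Continuous f)
    [FiniteDimensional 𝕜 (LinearMap.range f)] {p : Submodule 𝕜 E} (hp : Dense (p : Set E)) :
    p.map f = LinearMap.range f := by
  refine le_antisymm LinearMap.map_le_range ?_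
  have : FiniteDimensional 𝕜 (p.map f) := Submodule.finiteDimensional_of_le LinearMap.map_le_range
  rintro _ ⟨x, rfl⟩
  exact (p.map f).closed_of_finiteDimensional.closure_subset
    (map_mem_closure hf (hp x) fun y hy => Submodule.mem_map_of_mem hy)

theorem FiniteRank.mul_left_s9 {T : X →L[ℝ] X} (hT : FiniteRank T) (S : X →L[ℝ] X) :
    FiniteRank (S * T) := by
  unfold FiniteRank at *
  rw [ContinuousLinearMap.toLinearMap_mul, Module.End.mul_eq_comp, LinearMap.range_comp]
  exact Module.Finite.map _ _

theorem dense_XF {A : NonUnitalSubalgebra ℝ (X →L[ℝ] X)} (hA : IsLSet (A : Set (X →L[ℝ] X))) :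
    Dense (XF (A : Set (X →L[ℝ] X)) : Set X) := by
  obtain ⟨htrans, T, hTA, hT0, hTF⟩ := hA
  obtain ⟨y, hy⟩ := DFunLike.ne_iff.1 hT0
  rw [Metric.dense_iff]
  intro x r hr
  obtain ⟨S, hSA, hS⟩ := htrans (T y) hy x r hr
  refine ⟨S (T y), by rwa [Metric.mem_ball, dist_eq_norm], ?_⟩
  exact Submodule.subset_span ⟨S * T, ⟨mul_mem hSA hTA, hTF.mul_left_s9 S⟩, y, rfl⟩

theorem finrank_range_restrict_XF {A : NonUnitalSubalgebra ℝ (X →L[ℝ] X)}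
    (hA : IsLSet (A : Set (X →L[ℝ] X))) {T : X →L[ℝ] X} (hT : T ∈ AF (A : Set (X →L[ℝ] X))) :
    Module.finrank ℝ (LinearMap.range ((T : X →ₗ[ℝ] X).restrict (mapsto_XF hT))) =
      Module.finrank ℝ (LinearMap.range (T : X →ₗ[ℝ] X)) := by
  have : FiniteDimensional ℝ (LinearMap.range (T : X →ₗ[ℝ] X)) := hT.2
  have hmap := (T : X →ₗ[ℝ] X).map_eq_range_of_dense T.continuous (dense_XF hA)
  have hle : LinearMap.range (T : X →ₗ[ℝ] X) ≤ XF (A : Set (X →L[ℝ] X)) := by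
    rintro _ ⟨x, rfl⟩
    exact Submodule.subset_span ⟨T, hT, x, rfl⟩
  rw [LinearMap.range_restrict, hmap, ← Submodule.finrank_map_subtype_eq,
    Submodule.map_comap_subtype, inf_eq_right.2 hle]

theorem finrank_dvd_finrank_range_of_DD_algEquiv {K : Type*} [DivisionRing K] [Algebra ℝ K]
    {A : NonUnitalSubalgebra ℝ (X →L[ℝ] X)} (hA : IsLSet (A : Set (X →L[ℝ] X)))
    (e : DD (A : Set (X →L[ℝ] X)) ≃ₐ[ℝ] K) {T : X →L[ℝ] X}
    (hT : T ∈ AF (A : Set (X →L[ℝ] X))) :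
    Module.finrank ℝ K ∣ Module.finrank ℝ (LinearMap.range (T : X →ₗ[ℝ] X)) := by
  rw [← finrank_range_restrict_XF hA hT]
  refine Module.finrank_dvd_finrank_range_of_commute ((DD _).val.comp e.symm.toAlgHom) _
    fun k => ?_
  exact (Subalgebra.mem_centralizer_iff ℝ).1 (e.symm k).2 _ ⟨T, hT, rfl⟩

theorem stmt9_general {X : Type*} [NormedAddCommGroup X] [NormedSpace ℝ X]
    (A : NonUnitalSubalgebra ℝ (X →L[ℝ] X))
    (hA : IsLSet (A : Set (X →L[ℝ] X))) :
    (ComplexType (A : Set (X →L[ℝ] X)) →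
      ∀ T ∈ AF (A : Set (X →L[ℝ] X)), Even (Module.finrank ℝ (LinearMap.range (T : X →ₗ[ℝ] X)))) ∧
    (QuaternionType (A : Set (X →L[ℝ] X)) →
      ∀ T ∈ AF (A : Set (X →L[ℝ] X)), 4 ∣ Module.finrank ℝ (LinearMap.range (T : X →ₗ[ℝ] X))) := by
  constructor
  · rintro ⟨e⟩ T hT
    have h := finrank_dvd_finrank_range_of_DD_algEquiv hA e hT
    rw [Complex.finrank_real_complex] at h
    exact even_iff_two_dvd.2 h
  · rintro ⟨e⟩ T hT
    simpa only [Quaternion.finrank_eq_four] using finrank_dvd_finrank_range_of_DD_algEquiv hA e hT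

/-- (i) In an L-algebra of complex type every finite-rank member has even
rank. (ii) In an L-algebra of quaternion type every finite-rank member has rank
divisible by four. -/
theorem stmt9 {X : Type*} [NormedAddCommGroup X] [NormedSpace ℝ X] [CompleteSpace X]
    (hinf : ¬ FiniteDimensional ℝ X)
    (A : NonUnitalSubalgebra ℝ (X →L[ℝ] X))
    (hA : IsLSet (A : Set (X →L[ℝ] X))) :
    (ComplexType (A : Set (X →L[ℝ] X)) →
      ∀ T ∈ AF (A : Set (X →L[ℝ] X)), Even (Module.finrank ℝ (LinearMap.range (T : X →ₗ[ℝ] X)))) ∧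
    (QuaternionType (A : Set (X →L[ℝ] X)) →
      ∀ T ∈ AF (A : Set (X →L[ℝ] X)), 4 ∣ Module.finrank ℝ (LinearMap.range (T : X →ₗ[ℝ] X))) :=
  stmt9_general A hA

end
end

section
/- Let π be a representation of the quaternion group G_ℍ by linear bijections of a dense linear subspace E of an infinite-dimensional real Banach space X, with π(1) = id_E and π(−1) = −id_E. If π is closed and regular, then 𝒜_π is a Lomonosov algebra of quaternion type on X: 𝒜_π is closed in the strong operator topology, transitive, contains a nonzero finite-rank operator, and is of quaternion type. -/
open Filter Topology

noncomputable section

variable {X : Type*} [NormedAddCommGroup X] [NormedSpace ℝ X]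

/-!
The relations of `G_ℍ` make `q ↦ re q + q₁ π(i) + q₂ π(j) + q₃ π(k)` an algebra map
`Φ : ℍ → End E`, and `Φ(q)` commutes with (the restriction to `E` of) every operator of `𝒜_π`.
For `f ∈ E*` the functionals `f ∘ π(g)` extend continuously to `X`, and
`T x = ∑_g f(π(g) x) π(g⁻¹) u` defines a finite-rank operator of `𝒜_π`; summing over the group
gives `T x = Φ(ψ x) u` for a quaternion `ψ x` with real part `2 f(x)`. As `E*` separates points,
for `x ≠ 0` we may take `f x ≠ 0`, and then `u = Φ(ψ x)⁻¹ y` sends `x` to any `y ∈ E`: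
this gives transitivity. Feeding the same operators to an `S ∈ 𝔻` shows that `S` acts on `X^F`
as `Φ(ψ(S v) (ψ v)⁻¹)`, so `Φ` restricted to `X^F` is an isomorphism `ℍ ≃ 𝔻`.
SOT-closedness is exactly the closedness of `π`.
-/

open QuaternionGroup
open scoped Quaternion

theorem QuaternionGroup.sum_univ_two {M : Type*} [AddCommMonoid M] (f : QuaternionGroup 2 → M) :
    ∑ g, f g = f 1 + f (a 1) + f (a 2) + f (a 3) + (f (xa 0) + f (xa 1) + f (xa 2) + f (xa 3)) := by
  rw [show (Finset.univ : Finset (QuaternionGroup 2)) =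
      {1, a 1, a 2, a 3, xa 0, xa 1, xa 2, xa 3} by decide]
  simp +decide [add_assoc]

theorem FiniteRank.apply_mem_map_of_dense_s16 {T : X →L[ℝ] X} (hT : FiniteRank T)
    {E : Submodule ℝ X} (hE : Dense (E : Set X)) (x : X) : T x ∈ E.map (T : X →ₗ[ℝ] X) := by
  have : FiniteDimensional ℝ (LinearMap.range (T : X →ₗ[ℝ] X)) := hT
  have : FiniteDimensional ℝ (E.map (T : X →ₗ[ℝ] X)) :=
    Submodule.finiteDimensional_of_le LinearMap.map_le_range
  exact (Submodule.closed_of_finiteDimensional _).closure_subset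
    (image_closure_subset_closure_image T.continuous ⟨x, hE x, rfl⟩)

theorem apply_comm_of_mem_DD {A : Set (X →L[ℝ] X)} {S : Module.End ℝ (XF A)} (hS : S ∈ DD A)
    {T : X →L[ℝ] X} (hT : T ∈ AF A) (w : XF A) : (S ⟨T w, mapsto_XF hT w w.2⟩ : X) = T (S w) :=
  congrArg Subtype.val
    (LinearMap.congr_fun ((Subalgebra.mem_centralizer_iff ℝ).1 hS _ ⟨T, hT, rfl⟩) w).symm

namespace QRep

variable {ρ : QRep X}

theorem pi_a_two_mul (g : QuaternionGroup 2) : ρ.pi (a 2 * g) = -ρ.pi g := by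
  rw [ρ.pi_mul, ρ.pi_neg_one]
  exact neg_one_mul (ρ.pi g)

/-- In `QuaternionGroup 2` the elements `a 1`, `xa 0`, `xa 3` play the roles of `i`, `j`, `k`,
and `a 2` that of `-1`. -/
def quatBasis (ρ : QRep X) : QuaternionAlgebra.Basis (Module.End ℝ ρ.domain) (-1 : ℝ) 0 (-1) where
  i := ρ.pi (a 1)
  j := ρ.pi (xa 0)
  k := ρ.pi (xa 3)
  i_mul_i := by
    rw [← ρ.pi_mul, show a 1 * a 1 = (a 2 : QuaternionGroup 2) by decide, ρ.pi_neg_one]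
    simp
  j_mul_j := by
    rw [← ρ.pi_mul, show xa 0 * xa 0 = (a 2 : QuaternionGroup 2) by decide, ρ.pi_neg_one]
    simp
  i_mul_j := by rw [← ρ.pi_mul, show a 1 * xa 0 = (xa 3 : QuaternionGroup 2) by decide]
  j_mul_i := by
    rw [← ρ.pi_mul, show xa 0 * a 1 = (a 2 * xa 3 : QuaternionGroup 2) by decide, pi_a_two_mul]
    simp

def quat (ρ : QRep X) : ℍ[ℝ] →ₐ[ℝ] Module.End ℝ ρ.domain := ρ.quatBasis.liftHom

theorem quat_apply (q : ℍ[ℝ]) : ρ.quat q = algebraMap ℝ _ q.re + q.imI • ρ.pi (a 1) +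
    q.imJ • ρ.pi (xa 0) + q.imK • ρ.pi (xa 3) := rfl

theorem commute_quat {S : Module.End ℝ ρ.domain} (hS : ∀ g, Commute S (ρ.pi g)) (q : ℍ[ℝ]) :
    Commute S (ρ.quat q) := by
  rw [quat_apply]
  exact (((Algebra.commute_algebraMap_right _ _).add_right ((hS _).smul_right _)).add_right
    ((hS _).smul_right _)).add_right ((hS _).smul_right _)

/-- The quaternion `∑_g c g • g⁻¹`, reading `g` in `ℍ` as in `quatBasis`. -/
def orbitQuat (c : QuaternionGroup 2 → ℝ) : ℍ[ℝ] :=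
  ⟨c 1 - c (a 2), c (a 3) - c (a 1), c (xa 2) - c (xa 0), c (xa 1) - c (xa 3)⟩

theorem sum_smul_pi_inv (c : QuaternionGroup 2 → ℝ) :
    ∑ g, c g • ρ.pi g⁻¹ = ρ.quat (orbitQuat c) := by
  rw [quat_apply]
  simp only [QuaternionGroup.sum_univ_two, inv_one, ρ.pi_one, orbitQuat,
    Algebra.algebraMap_eq_smul_one]
  rw [show (a 1 : QuaternionGroup 2)⁻¹ = a 2 * a 1 by decide,
    show (a 2 : QuaternionGroup 2)⁻¹ = a 2 by decide,
    show (a 3 : QuaternionGroup 2)⁻¹ = a 1 by decide,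
    show (xa 0 : QuaternionGroup 2)⁻¹ = a 2 * xa 0 by decide,
    show (xa 1 : QuaternionGroup 2)⁻¹ = xa 3 by decide,
    show (xa 2 : QuaternionGroup 2)⁻¹ = xa 0 by decide,
    show (xa 3 : QuaternionGroup 2)⁻¹ = a 2 * xa 3 by decide,
    pi_a_two_mul, pi_a_two_mul, pi_a_two_mul, ρ.pi_neg_one]
  module

theorem mapsTo_domain_of_mem_algPi {T : X →L[ℝ] X} (hT : T ∈ AlgPi ρ) :
    Set.MapsTo T ρ.domain ρ.domain := fun e he => by
  obtain ⟨y, hy, -⟩ := hT ⟨e, he⟩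
  exact hy ▸ y.2

def restrictDomain {T : X →L[ℝ] X} (hT : T ∈ AlgPi ρ) : Module.End ℝ ρ.domain :=
  (T : X →ₗ[ℝ] X).restrict (mapsTo_domain_of_mem_algPi hT)

theorem commute_restrictDomain_pi {T : X →L[ℝ] X} (hT : T ∈ AlgPi ρ) (g : QuaternionGroup 2) :
    Commute (restrictDomain hT) (ρ.pi g) := by
  ext e
  obtain ⟨y, hy, hyg⟩ := hT e
  have : restrictDomain hT e = y := Subtype.ext hy.symm
  simp only [Module.End.mul_apply, this]
  exact hyg g

theorem apply_quat_of_mem_algPi {T : X →L[ℝ] X} (hT : T ∈ AlgPi ρ) (q : ℍ[ℝ]) (e : ρ.domain) :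
    T (ρ.quat q e) = ρ.quat q (restrictDomain hT e) :=
  congrArg Subtype.val (LinearMap.congr_fun (commute_quat (commute_restrictDomain_pi hT) q) e)

theorem sotClosed_algPi (hcl : QRepClosed ρ) : SOTClosed (AlgPi ρ) := by
  classical
  intro T hT e
  have hS : ∀ n : ℕ, ∃ S ∈ AlgPi ρ, ∀ g, ‖S (ρ.pi g e) - T (ρ.pi g e)‖ < 1 / (n + 1) := fun n => by
    obtain ⟨S, hS, hSe⟩ :=
      hT _ Nat.one_div_pos_of_nat (Finset.univ.image fun g => (ρ.pi g e : X))
    exact ⟨S, hS, fun g => hSe _ (Finset.mem_image_of_mem _ (Finset.mem_univ g))⟩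
  choose S hSA hST using hS
  choose y _ hyg using fun n => hSA n e
  have hlim : ∀ g, Tendsto (fun n => (ρ.pi g (y n) : X)) atTop (𝓝 (T (ρ.pi g e))) := fun g => by
    refine tendsto_iff_norm_sub_tendsto_zero.2 (squeeze_zero (fun _ => norm_nonneg _)
      (fun n => ?_) tendsto_one_div_add_atTop_nhds_zero_nat)
    rw [← hyg n g]
    exact (hST n g).le
  obtain ⟨z, hz⟩ := hcl y _ hlim
  refine ⟨z, ?_, fun g => hz g⟩
  simpa [ρ.pi_one] using (hz 1).symm

/-- The set `E*`. -/
def boundedDual (ρ : QRep X) : Set (StrongDual ℝ X) :=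
  {f | ∃ C > 0, ∀ g : QuaternionGroup 2, ∀ x : ρ.domain, |f (ρ.pi g x : X)| ≤ C * ‖(x : X)‖}

theorem exists_mem_boundedDual_apply_ne_zero (hreg : QRepRegular ρ) {x : X} (hx : x ≠ 0) :
    ∃ f ∈ ρ.boundedDual, f x ≠ 0 := by
  by_contra! h
  have hsub : StrongDual.toWeakDual '' ρ.boundedDual ⊆ {φ : WeakDual ℝ X | φ x = 0} := by
    rintro _ ⟨f, hf, rfl⟩
    exact h f hf
  have hclosed : IsClosed {φ : WeakDual ℝ X | φ x = 0} :=
    isClosed_eq (WeakDual.eval_continuous x) continuous_const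
  exact hx (SeparatingDual.eq_zero_of_forall_dual_eq_zero fun f =>
    closure_minimal hsub hclosed (hreg (StrongDual.toWeakDual f)))

theorem denseRange_domain_subtype : DenseRange ρ.domain.subtype := by
  simpa [DenseRange] using ρ.dense'

theorem exists_mem_domain_ne_zero [Nontrivial X] : ∃ e ∈ ρ.domain, e ≠ 0 :=
  (ρ.dense'.sdiff_singleton 0).nonempty

theorem exists_bound_of_mem_boundedDual {f : StrongDual ℝ X} (hf : f ∈ ρ.boundedDual)
    (g : QuaternionGroup 2) : ∃ C, ∀ e : ρ.domain, ‖f (ρ.pi g e : X)‖ ≤ C * ‖(e : X)‖ := by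
  obtain ⟨C, -, hC⟩ := hf
  exact ⟨C, hC g⟩

/-- The continuous extension of `f ∘ π(g)` from `E` to `X` (junk when `f ∉ E*`). -/
def orbitDual (ρ : QRep X) (f : StrongDual ℝ X) (g : QuaternionGroup 2) : StrongDual ℝ X :=
  ((f : X →ₗ[ℝ] ℝ) ∘ₗ ρ.domain.subtype ∘ₗ ρ.pi g).extendOfNorm ρ.domain.subtype

theorem orbitDual_apply_coe {f : StrongDual ℝ X} (hf : f ∈ ρ.boundedDual) (g : QuaternionGroup 2)
    (e : ρ.domain) : ρ.orbitDual f g e = f (ρ.pi g e) :=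
  LinearMap.extendOfNorm_eq denseRange_domain_subtype (exists_bound_of_mem_boundedDual hf g) e

theorem orbitDual_eq {f : StrongDual ℝ X} (hf : f ∈ ρ.boundedDual) {g : QuaternionGroup 2}
    {F : StrongDual ℝ X} (hF : ∀ e : ρ.domain, F e = f (ρ.pi g e)) : ρ.orbitDual f g = F := by
  obtain ⟨C, hC⟩ := exists_bound_of_mem_boundedDual hf g
  exact LinearMap.extendOfNorm_unique denseRange_domain_subtype C hC F (LinearMap.ext hF)

theorem orbitDual_one {f : StrongDual ℝ X} (hf : f ∈ ρ.boundedDual) : ρ.orbitDual f 1 = f :=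
  orbitDual_eq hf fun e => by simp [ρ.pi_one]

theorem orbitDual_a_two {f : StrongDual ℝ X} (hf : f ∈ ρ.boundedDual) :
    ρ.orbitDual f (a 2) = -f :=
  orbitDual_eq hf fun e => by simp [ρ.pi_neg_one]

def orbitOp (ρ : QRep X) (f : StrongDual ℝ X) (u : ρ.domain) : X →L[ℝ] X :=
  ∑ g, (ρ.orbitDual f g).smulRight (ρ.pi g⁻¹ u : X)

def quatFunctional (ρ : QRep X) (f : StrongDual ℝ X) (x : X) : ℍ[ℝ] :=
  orbitQuat fun g => ρ.orbitDual f g x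

theorem orbitOp_apply (f : StrongDual ℝ X) (u : ρ.domain) (x : X) :
    ρ.orbitOp f u x = ρ.quat (ρ.quatFunctional f x) u := by
  rw [quatFunctional, ← sum_smul_pi_inv]
  simp [orbitOp]

theorem orbitOp_apply_coe {f : StrongDual ℝ X} (hf : f ∈ ρ.boundedDual) (u e : ρ.domain) :
    ρ.orbitOp f u e = (∑ g, f (ρ.pi g e : X) • ρ.pi g⁻¹ u : ρ.domain) := by
  simp [orbitOp, orbitDual_apply_coe hf]

theorem orbitOp_mem_algPi {f : StrongDual ℝ X} (hf : f ∈ ρ.boundedDual) (u : ρ.domain) :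
    ρ.orbitOp f u ∈ AlgPi ρ := by
  intro e
  refine ⟨_, (orbitOp_apply_coe hf u e).symm, fun h => ?_⟩
  rw [orbitOp_apply_coe hf, map_sum]
  congr 1
  refine Fintype.sum_equiv (Equiv.mulRight h) _ _ fun g => ?_
  simp only [Equiv.coe_mulRight, map_smul, ← Module.End.mul_apply, ← ρ.pi_mul, mul_inv_rev,
    mul_inv_cancel_left]

theorem finiteRank_orbitOp (f : StrongDual ℝ X) (u : ρ.domain) : FiniteRank (ρ.orbitOp f u) := by
  have := FiniteDimensional.span_of_finite ℝ (Set.finite_range fun g => (ρ.pi g⁻¹ u : X))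
  refine Submodule.finiteDimensional_of_le
    (S₂ := Submodule.span ℝ (Set.range fun g => (ρ.pi g⁻¹ u : X))) ?_
  rintro _ ⟨x, rfl⟩
  simp only [orbitOp, ContinuousLinearMap.coe_coe, FunLike.coe_sum, Finset.sum_apply,
    ContinuousLinearMap.smulRight_apply]
  exact Submodule.sum_mem _ fun g _ => Submodule.smul_mem _ _ (Submodule.subset_span ⟨g, rfl⟩)

theorem orbitOp_mem_AF {f : StrongDual ℝ X} (hf : f ∈ ρ.boundedDual) (u : ρ.domain) :
    ρ.orbitOp f u ∈ AF (AlgPi ρ) :=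
  ⟨orbitOp_mem_algPi hf u, finiteRank_orbitOp f u⟩

theorem re_quatFunctional {f : StrongDual ℝ X} (hf : f ∈ ρ.boundedDual) (x : X) :
    (ρ.quatFunctional f x).re = 2 * f x := by
  simp [quatFunctional, orbitQuat, orbitDual_one hf, orbitDual_a_two hf]
  ring

theorem orbitOp_quat_inv_apply {f : StrongDual ℝ X} (hf : f ∈ ρ.boundedDual) {x : X}
    (hx : f x ≠ 0) (y : ρ.domain) : ρ.orbitOp f (ρ.quat (ρ.quatFunctional f x)⁻¹ y) x = y := by
  have hq : ρ.quatFunctional f x ≠ 0 := fun h => hx (by simpa [h] using re_quatFunctional hf x)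
  rw [orbitOp_apply, ← Module.End.mul_apply, ← map_mul, mul_inv_cancel₀ hq, map_one]
  rfl

theorem exists_mem_AF_apply_eq (hreg : QRepRegular ρ) {x : X} (hx : x ≠ 0) (y : ρ.domain) :
    ∃ T ∈ AF (AlgPi ρ), T x = y := by
  obtain ⟨f, hf, hfx⟩ := exists_mem_boundedDual_apply_ne_zero hreg hx
  exact ⟨_, orbitOp_mem_AF hf _, orbitOp_quat_inv_apply hf hfx y⟩

theorem exists_apply_eq_of_mem_AF {T : X →L[ℝ] X} (hT : T ∈ AF (AlgPi ρ)) (x : X) :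
    ∃ e : ρ.domain, T e = T x := by
  obtain ⟨e, he, hex⟩ := hT.2.apply_mem_map_of_dense_s16 ρ.dense' x
  exact ⟨⟨e, he⟩, hex⟩

theorem XF_le_domain : XF (AlgPi ρ) ≤ ρ.domain := by
  rw [XF, Submodule.span_le]
  rintro _ ⟨T, hT, x, rfl⟩
  obtain ⟨e, he⟩ := exists_apply_eq_of_mem_AF hT x
  exact he ▸ mapsTo_domain_of_mem_algPi hT.1 e.2

theorem quat_mem_XF (q : ℍ[ℝ]) {w : X} (hw : w ∈ XF (AlgPi ρ)) :
    (ρ.quat q ⟨w, XF_le_domain hw⟩ : X) ∈ XF (AlgPi ρ) := by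
  induction hw using Submodule.span_induction with
  | mem w hw =>
    obtain ⟨T, hT, x, rfl⟩ := hw
    obtain ⟨e, he⟩ := exists_apply_eq_of_mem_AF hT x
    rw [show (⟨T x, _⟩ : ρ.domain) = restrictDomain hT.1 e from Subtype.ext he.symm,
      ← apply_quat_of_mem_algPi]
    exact Submodule.subset_span ⟨T, hT, _, rfl⟩
  | zero =>
    convert zero_mem (XF (AlgPi ρ))
    exact congrArg Subtype.val (map_zero (ρ.quat q))
  | add x y _ _ hqx hqy =>
    convert add_mem hqx hqy using 1
    rw [← Submodule.coe_add, ← map_add]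
    rfl
  | smul r x _ hqx =>
    convert Submodule.smul_mem _ r hqx using 1
    rw [← Submodule.coe_smul, ← map_smul]
    rfl

def quatXF (ρ : QRep X) : ℍ[ℝ] →ₐ[ℝ] Module.End ℝ (XF (AlgPi ρ)) where
  toFun q := (ρ.domain.subtype ∘ₗ ρ.quat q ∘ₗ Submodule.inclusion XF_le_domain).codRestrict _
    fun w => quat_mem_XF q w.2
  map_one' := by ext; simp
  map_mul' q r := by ext; simp; rfl
  map_zero' := by ext; simp
  map_add' q r := by ext; simp; rfl
  commutes' c := by
    ext w
    change (ρ.quat (algebraMap ℝ ℍ[ℝ] c) _ : X) = _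
    rw [AlgHom.commutes]
    rfl

theorem coe_quatXF_apply (q : ℍ[ℝ]) (w : XF (AlgPi ρ)) :
    (ρ.quatXF q w : X) = ρ.quat q ⟨w, XF_le_domain w.2⟩ := rfl

theorem quatXF_mem_DD (q : ℍ[ℝ]) : ρ.quatXF q ∈ DD (AlgPi ρ) := by
  rw [DD, Subalgebra.mem_centralizer_iff]
  rintro _ ⟨T, hT, rfl⟩
  ext w
  exact apply_quat_of_mem_algPi hT.1 q ⟨w, XF_le_domain w.2⟩

def quatDD (ρ : QRep X) : ℍ[ℝ] →ₐ[ℝ] DD (AlgPi ρ) := ρ.quatXF.codRestrict _ quatXF_mem_DD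

theorem exists_quatXF_eq_of_mem_DD (hreg : QRepRegular ρ) {v : X} (hv : v ∈ XF (AlgPi ρ))
    (hv0 : v ≠ 0) {S : Module.End ℝ (XF (AlgPi ρ))} (hS : S ∈ DD (AlgPi ρ)) :
    ∃ q, ρ.quatXF q = S := by
  obtain ⟨f, hf, hfv⟩ := exists_mem_boundedDual_apply_ne_zero hreg hv0
  set p := (ρ.quatFunctional f v)⁻¹
  refine ⟨ρ.quatFunctional f (S ⟨v, hv⟩) * p, LinearMap.ext fun w => Subtype.ext ?_⟩
  set T := ρ.orbitOp f (ρ.quat p ⟨w, XF_le_domain w.2⟩)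
  have hTv : (⟨T v, mapsto_XF (orbitOp_mem_AF hf _) v hv⟩ : XF (AlgPi ρ)) = w :=
    Subtype.ext (orbitOp_quat_inv_apply hf hfv _)
  calc (ρ.quatXF (ρ.quatFunctional f (S ⟨v, hv⟩) * p) w : X)
      = T (S ⟨v, hv⟩) := by rw [coe_quatXF_apply, map_mul, orbitOp_apply]; rfl
    _ = S w := by rw [← apply_comm_of_mem_DD hS (orbitOp_mem_AF hf _), hTv]

theorem quaternionType_algPi (hreg : QRepRegular ρ) {v : X} (hv : v ∈ XF (AlgPi ρ))
    (hv0 : v ≠ 0) : QuaternionType (AlgPi ρ) := by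
  have : Nontrivial (XF (AlgPi ρ)) := ⟨⟨⟨v, hv⟩, 0, fun h => hv0 (congrArg Subtype.val h)⟩⟩
  refine ⟨(AlgEquiv.ofBijective ρ.quatDD
    ⟨(ρ.quatDD : ℍ[ℝ] →+* DD (AlgPi ρ)).injective, ?_⟩).symm⟩
  rintro ⟨S, hS⟩
  obtain ⟨q, hq⟩ := exists_quatXF_eq_of_mem_DD hreg hv hv0 hS
  exact ⟨q, Subtype.ext hq⟩

end QRep

theorem stmt16_general {X : Type*} [NormedAddCommGroup X] [NormedSpace ℝ X]
    (hinf : ¬ FiniteDimensional ℝ X)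
    (ρ : QRep X) (hcl : QRepClosed ρ) (hreg : QRepRegular ρ) :
    SOTClosed (AlgPi ρ) ∧ IsTransitiveAlg (AlgPi ρ) ∧
    (∃ T ∈ AlgPi ρ, T ≠ 0 ∧ FiniteRank T) ∧ QuaternionType (AlgPi ρ) := by
  have : Nontrivial X := not_subsingleton_iff_nontrivial.1 fun _ => hinf inferInstance
  obtain ⟨x₀, hx₀⟩ := exists_ne (0 : X)
  obtain ⟨e₀, he₀, he₀_ne⟩ := QRep.exists_mem_domain_ne_zero (ρ := ρ)
  obtain ⟨T, hT, hTx₀⟩ := QRep.exists_mem_AF_apply_eq hreg hx₀ ⟨e₀, he₀⟩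
  refine ⟨QRep.sotClosed_algPi hcl, fun x hx y ε hε => ?_, ⟨T, hT.1, ?_, hT.2⟩,
    QRep.quaternionType_algPi hreg (Submodule.subset_span ⟨T, hT, x₀, hTx₀⟩) he₀_ne⟩
  · obtain ⟨e, he, hey⟩ := Metric.mem_closure_iff.1 (ρ.dense' y) ε hε
    obtain ⟨S, hS, hSx⟩ := QRep.exists_mem_AF_apply_eq hreg hx ⟨e, he⟩
    exact ⟨S, hS.1, by rwa [hSx, ← dist_eq_norm, dist_comm]⟩
  · rintro rfl
    exact he₀_ne hTx₀.symm

/-- If `π` is a closed and regular representation of the quaternion group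
on a dense subspace of an infinite-dimensional real Banach space (with `π(1) = id`,
`π(-1) = -id`), then `𝒜_π` is a Lomonosov algebra of quaternion type: SOT-closed,
transitive, containing a nonzero finite-rank operator, and of quaternion type. -/
theorem stmt16 {X : Type*} [NormedAddCommGroup X] [NormedSpace ℝ X] [CompleteSpace X]
    (hinf : ¬ FiniteDimensional ℝ X)
    (ρ : QRep X) (hcl : QRepClosed ρ) (hreg : QRepRegular ρ) :
    SOTClosed (AlgPi ρ) ∧ IsTransitiveAlg (AlgPi ρ) ∧
    (∃ T ∈ AlgPi ρ, T ≠ 0 ∧ FiniteRank T) ∧ QuaternionType (AlgPi ρ) :=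
  stmt16_general hinf ρ hcl hreg
end
end
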